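/- arXiv:2005.11653 — 3 statements merged into one kernel-verified Lean document; each statement's English description precedes it below -/
import Mathlib

section
/- Let (X, d) be a metric space, let μ and ν be probability measures on X, and let γ be a probability measure on X × X whose first marginal is μ and whose second marginal is ν (a coupling of μ and ν). Let h, h' : X → ℝ be 1-Lipschitz functions, and assume the function (x, y) ↦ d(x, y) is integrable with respect to γ and x ↦ |h x − h' x| is integrable with respect to both μ and ν. Then ∫ |h(x) − h'(x)| dν(x) ≤ ∫ |h(x) − h'(x)| dμ(x) + 2 ∫ d(x, y) dγ(x, y). -/
/-!
Integrating the pointwise bound `f y ≤ f x + K * dist x y` of a `K`-Lipschitz `f` against a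
coupling `γ` of `μ` and `ν` compares `∫ f ∂ν` with `∫ f ∂μ`, since each side is the integral over
`γ` of `f` composed with a projection. The disagreement `|h - h'|` of two `1`-Lipschitz functions
is `2`-Lipschitz.
-/

open MeasureTheory NNReal

theorem LipschitzWith.abs_sub {α : Type*} [PseudoEMetricSpace α] {Kf Kg : ℝ≥0} {f g : α → ℝ}
    (hf : LipschitzWith Kf f) (hg : LipschitzWith Kg g) :
    LipschitzWith (Kf + Kg) fun x => |f x - g x| := by
  rw [← one_mul (Kf + Kg)]
  exact lipschitzWith_one_norm.comp (hf.sub hg)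

theorem LipschitzWith.integral_le_integral_add_mul_integral_dist {X : Type*}
    [PseudoMetricSpace X] [MeasurableSpace X] {f : X → ℝ} {K : ℝ≥0} (hf : LipschitzWith K f)
    {μ ν : Measure X} {γ : Measure (X × X)} (hγ₁ : γ.map Prod.fst = μ)
    (hγ₂ : γ.map Prod.snd = ν) (hdist : Integrable (fun p : X × X => dist p.1 p.2) γ)
    (hμ : Integrable f μ) (hν : Integrable f ν) :
    ∫ x, f x ∂ν ≤ ∫ x, f x ∂μ + K * ∫ p, dist p.1 p.2 ∂γ := by
  subst hγ₁ hγ₂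
  have hfst : Integrable (fun p : X × X => f p.1) γ := hμ.comp_measurable measurable_fst
  have hsnd : Integrable (fun p : X × X => f p.2) γ := hν.comp_measurable measurable_snd
  rw [integral_map measurable_fst.aemeasurable hμ.aestronglyMeasurable,
    integral_map measurable_snd.aemeasurable hν.aestronglyMeasurable, ← integral_const_mul,
    ← integral_add hfst (hdist.const_mul _)]
  exact integral_mono hsnd (hfst.add (hdist.const_mul _)) fun p => by
    simpa only [dist_comm] using hf.le_add_mul p.2 p.1

theorem coupling_disagreement_transfer_general
    {X : Type*} [MetricSpace X] [MeasurableSpace X]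
    (μ ν : Measure X)
    (γ : Measure (X × X))
    (hγ₁ : γ.map Prod.fst = μ) (hγ₂ : γ.map Prod.snd = ν)
    (h h' : X → ℝ) (hLh : LipschitzWith 1 h) (hLh' : LipschitzWith 1 h')
    (hdist : Integrable (fun p : X × X => dist p.1 p.2) γ)
    (hμint : Integrable (fun x => |h x - h' x|) μ)
    (hνint : Integrable (fun x => |h x - h' x|) ν) :
    ∫ x, |h x - h' x| ∂ν ≤ ∫ x, |h x - h' x| ∂μ + 2 * ∫ p, dist p.1 p.2 ∂γ := by
  simpa [one_add_one_eq_two] using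
    (hLh.abs_sub hLh').integral_le_integral_add_mul_integral_dist hγ₁ hγ₂ hdist hμint hνint

theorem coupling_disagreement_transfer
    {X : Type*} [MetricSpace X] [MeasurableSpace X]
    (μ ν : Measure X) [IsProbabilityMeasure μ] [IsProbabilityMeasure ν]
    (γ : Measure (X × X)) [IsProbabilityMeasure γ]
    (hγ₁ : γ.map Prod.fst = μ) (hγ₂ : γ.map Prod.snd = ν)
    (h h' : X → ℝ) (hLh : LipschitzWith 1 h) (hLh' : LipschitzWith 1 h')
    (hdist : Integrable (fun p : X × X => dist p.1 p.2) γ)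
    (hμint : Integrable (fun x => |h x - h' x|) μ)
    (hνint : Integrable (fun x => |h x - h' x|) ν) :
    ∫ x, |h x - h' x| ∂ν ≤ ∫ x, |h x - h' x| ∂μ + 2 * ∫ p, dist p.1 p.2 ∂γ :=
  coupling_disagreement_transfer_general μ ν γ hγ₁ hγ₂ h h' hLh hLh' hdist hμint hνint
end

section
/- Let (X, d) be a metric space, let μ (source distribution) and ν (target distribution) be probability measures on X, and let γ be a probability measure on X × X whose first marginal is μ and whose second marginal is ν. Let h : X → ℝ (the hypothesis), f_S : X → ℝ (the source labeling function) and f_T : X → ℝ (the target labeling function) be 1-Lipschitz, and assume (x, y) ↦ d(x, y) is integrable with respect to γ, and that |h − f_T|, |h − f_S| and |f_S − f_T| are integrable with respect to both μ and ν. Then the target risk satisfies ∫ |h(x) − f_T(x)| dν(x) ≤ ∫ |h(x) − f_S(x)| dμ(x) + 2 ∫ d(x, y) dγ(x, y) + ∫ |f_S(x) − f_T(x)| dμ(x). -/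
/-! Since `h` and `fT` are 1-Lipschitz, for every pair `(x, y)` one has
`|h y - fT y| ≤ |h x - fS x| + |fS x - fT x| + 2 d(x, y)`. Integrating this against the
coupling `γ` turns the left side into a `ν`-integral and the `x`-terms into `μ`-integrals,
by the marginal conditions. -/

open MeasureTheory

theorem LipschitzWith.abs_sub_le_abs_sub_add_mul_dist {X : Type*} [PseudoMetricSpace X]
    {f g : X → ℝ} {Kf Kg : NNReal} (hf : LipschitzWith Kf f) (hg : LipschitzWith Kg g)
    (x y : X) : |f y - g y| ≤ |f x - g x| + (Kf + Kg) * dist x y := by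
  have hfg : |(f y - g y) - (f x - g x)| ≤ (Kf + Kg) * dist y x := by
    simpa only [Real.dist_eq, NNReal.coe_add] using (hf.sub hg).dist_le_mul y x
  have hrev := abs_sub_abs_le_abs_sub (f y - g y) (f x - g x)
  rw [dist_comm] at hfg
  linarith

theorem integral_le_integral_add_integral_of_coupling {X : Type*} [MeasurableSpace X]
    {μ ν : Measure X} {γ : Measure (X × X)}
    (hγ₁ : γ.map Prod.fst = μ) (hγ₂ : γ.map Prod.snd = ν)
    {F G : X → ℝ} {c : X × X → ℝ} (hF : Integrable F ν) (hG : Integrable G μ)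
    (hc : Integrable c γ) (hFG : ∀ x y, F y ≤ G x + c (x, y)) :
    ∫ y, F y ∂ν ≤ ∫ x, G x ∂μ + ∫ p, c p ∂γ := by
  subst hγ₁ hγ₂
  have hF' : Integrable (fun p : X × X => F p.2) γ :=
    hF.comp_aemeasurable measurable_snd.aemeasurable
  have hG' : Integrable (fun p : X × X => G p.1) γ :=
    hG.comp_aemeasurable measurable_fst.aemeasurable
  rw [integral_map measurable_snd.aemeasurable hF.aestronglyMeasurable,
    integral_map measurable_fst.aemeasurable hG.aestronglyMeasurable, ← integral_add hG' hc]
  exact integral_mono hF' (hG'.add hc) fun p => hFG p.1 p.2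

theorem conditional_shift_bound_primal_general
    {X : Type*} [MetricSpace X] [MeasurableSpace X]
    (μ ν : Measure X)
    (γ : Measure (X × X))
    (hγ₁ : γ.map Prod.fst = μ) (hγ₂ : γ.map Prod.snd = ν)
    (h fS fT : X → ℝ)
    (hLh : LipschitzWith 1 h) (hLfT : LipschitzWith 1 fT)
    (hdist : Integrable (fun p : X × X => dist p.1 p.2) γ)
    (hν₁ : Integrable (fun x => |h x - fT x|) ν)
    (hμ₂ : Integrable (fun x => |h x - fS x|) μ)
    (hμ₃ : Integrable (fun x => |fS x - fT x|) μ) :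
    ∫ x, |h x - fT x| ∂ν ≤
      ∫ x, |h x - fS x| ∂μ + 2 * ∫ p, dist p.1 p.2 ∂γ +
        ∫ x, |fS x - fT x| ∂μ := by
  have hpointwise : ∀ x y, |h y - fT y| ≤ (|h x - fS x| + |fS x - fT x|) + 2 * dist x y :=
    fun x y => by
      have hshift := hLh.abs_sub_le_abs_sub_add_mul_dist hLfT x y
      have htriangle := abs_sub_le (h x) (fS x) (fT x)
      norm_num at hshift
      linarith
  have hbound := integral_le_integral_add_integral_of_coupling hγ₁ hγ₂ hν₁ (hμ₂.add hμ₃)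
    (hdist.const_mul 2) hpointwise
  rw [integral_add' hμ₂ hμ₃, integral_const_mul] at hbound
  linarith

theorem conditional_shift_bound_primal
    {X : Type*} [MetricSpace X] [MeasurableSpace X]
    (μ ν : Measure X) [IsProbabilityMeasure μ] [IsProbabilityMeasure ν]
    (γ : Measure (X × X)) [IsProbabilityMeasure γ]
    (hγ₁ : γ.map Prod.fst = μ) (hγ₂ : γ.map Prod.snd = ν)
    (h fS fT : X → ℝ)
    (hLh : LipschitzWith 1 h) (hLfS : LipschitzWith 1 fS) (hLfT : LipschitzWith 1 fT)
    (hdist : Integrable (fun p : X × X => dist p.1 p.2) γ)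
    (hμ₁ : Integrable (fun x => |h x - fT x|) μ)
    (hν₁ : Integrable (fun x => |h x - fT x|) ν)
    (hμ₂ : Integrable (fun x => |h x - fS x|) μ)
    (hν₂ : Integrable (fun x => |h x - fS x|) ν)
    (hμ₃ : Integrable (fun x => |fS x - fT x|) μ)
    (hν₃ : Integrable (fun x => |fS x - fT x|) ν) :
    ∫ x, |h x - fT x| ∂ν ≤
      ∫ x, |h x - fS x| ∂μ + 2 * ∫ p, dist p.1 p.2 ∂γ +
        ∫ x, |fS x - fT x| ∂μ :=
  conditional_shift_bound_primal_general μ ν γ hγ₁ hγ₂ h fS fT hLh hLfT hdist hν₁ hμ₂ hμ₃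
end

section
/- Let (X, d) be a metric space, let μ (source distribution) and ν (target distribution) be probability measures on X, and let γ be a probability measure on X × X whose first marginal is μ and whose second marginal is ν. Let h, f_S, f_T : X → ℝ be 1-Lipschitz, assume (x, y) ↦ d(x, y) is integrable with respect to γ, and assume |h − f_T|, |h − f_S| and |f_S − f_T| are integrable with respect to both μ and ν. Then the target risk satisfies ∫ |h(x) − f_T(x)| dν(x) ≤ ∫ |h(x) − f_S(x)| dμ(x) + 2 ∫ d(x, y) dγ(x, y) + min( ∫ |f_S(x) − f_T(x)| dμ(x), ∫ |f_S(x) − f_T(x)| dν(x) ). -/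
/-!
Both bounds combine a pointwise triangle inequality with a transport estimate: for a
`K`-Lipschitz `g` and a coupling `γ` of `μ` and `ν`, integrating `g y ≤ g x + K d(x, y)`
against `γ` gives `∫ g dν ≤ ∫ g dμ + K ∫ d dγ`. Transporting `|h - f_T|` (which is
2-Lipschitz) and then splitting it through `f_S` under `μ` yields the `μ`-term; splitting
through `f_S` under `ν` first and then transporting `|h - f_S|` yields the `ν`-term.
-/

open MeasureTheory

lemma LipschitzWith.abs_sub_s5 {α : Type*} [PseudoEMetricSpace α] {Ka Kb : NNReal} {a b : α → ℝ}
    (ha : LipschitzWith Ka a) (hb : LipschitzWith Kb b) :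
    LipschitzWith (Ka + Kb) fun x => |a x - b x| := by
  have := lipschitzWith_one_norm.comp (ha.sub hb)
  rwa [one_mul] at this

lemma LipschitzWith.integral_map_snd_le {X : Type*} [PseudoMetricSpace X] [MeasurableSpace X]
    {γ : Measure (X × X)} {K : NNReal} {g : X → ℝ} (hg : LipschitzWith K g)
    (hdist : Integrable (fun p : X × X => dist p.1 p.2) γ)
    (hfst : Integrable g (γ.map Prod.fst)) (hsnd : Integrable g (γ.map Prod.snd)) :
    ∫ x, g x ∂(γ.map Prod.snd) ≤ ∫ x, g x ∂(γ.map Prod.fst) + K * ∫ p, dist p.1 p.2 ∂γ := by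
  have hg₁ : Integrable (fun p : X × X => g p.1) γ :=
    hfst.comp_aemeasurable measurable_fst.aemeasurable
  have hg₂ : Integrable (fun p : X × X => g p.2) γ :=
    hsnd.comp_aemeasurable measurable_snd.aemeasurable
  rw [integral_map measurable_snd.aemeasurable hsnd.1,
    integral_map measurable_fst.aemeasurable hfst.1, ← integral_const_mul,
    ← integral_add hg₁ (hdist.const_mul _)]
  refine integral_mono hg₂ (hg₁.add (hdist.const_mul _)) fun p => ?_
  have hgp := hg.dist_le_mul p.2 p.1
  rw [Real.dist_eq, dist_comm] at hgp
  linarith [le_abs_self (g p.2 - g p.1)]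

lemma integral_abs_sub_le_add {α : Type*} [MeasurableSpace α] {μ : Measure α} {a b c : α → ℝ}
    (hab : Integrable (fun x => |a x - b x|) μ) (hbc : Integrable (fun x => |b x - c x|) μ) :
    ∫ x, |a x - c x| ∂μ ≤ ∫ x, |a x - b x| ∂μ + ∫ x, |b x - c x| ∂μ := by
  rw [← integral_add hab hbc]
  exact integral_mono_of_nonneg (.of_forall fun x => abs_nonneg _) (hab.add hbc)
    (.of_forall fun x => abs_sub_le (a x) (b x) (c x))

theorem conditional_shift_bound_min_general
    {X : Type*} [MetricSpace X] [MeasurableSpace X]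
    (μ ν : Measure X)
    (γ : Measure (X × X))
    (hγ₁ : γ.map Prod.fst = μ) (hγ₂ : γ.map Prod.snd = ν)
    (h fS fT : X → ℝ)
    (hLh : LipschitzWith 1 h) (hLfS : LipschitzWith 1 fS) (hLfT : LipschitzWith 1 fT)
    (hdist : Integrable (fun p : X × X => dist p.1 p.2) γ)
    (hμ₁ : Integrable (fun x => |h x - fT x|) μ)
    (hν₁ : Integrable (fun x => |h x - fT x|) ν)
    (hμ₂ : Integrable (fun x => |h x - fS x|) μ)
    (hν₂ : Integrable (fun x => |h x - fS x|) ν)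
    (hμ₃ : Integrable (fun x => |fS x - fT x|) μ)
    (hν₃ : Integrable (fun x => |fS x - fT x|) ν) :
    ∫ x, |h x - fT x| ∂ν ≤
      ∫ x, |h x - fS x| ∂μ + 2 * ∫ p, dist p.1 p.2 ∂γ +
        min (∫ x, |fS x - fT x| ∂μ) (∫ x, |fS x - fT x| ∂ν) := by
  subst hγ₁ hγ₂
  have transport_fT := (hLh.abs_sub_s5 hLfT).integral_map_snd_le hdist hμ₁ hν₁
  have transport_fS := (hLh.abs_sub_s5 hLfS).integral_map_snd_le hdist hμ₂ hν₂
  have split_μ := integral_abs_sub_le_add hμ₂ hμ₃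
  have split_ν := integral_abs_sub_le_add hν₂ hν₃
  norm_num at transport_fT transport_fS
  rw [← min_add_add_left]
  exact le_min (by linarith) (by linarith)

theorem conditional_shift_bound_min
    {X : Type*} [MetricSpace X] [MeasurableSpace X]
    (μ ν : Measure X) [IsProbabilityMeasure μ] [IsProbabilityMeasure ν]
    (γ : Measure (X × X)) [IsProbabilityMeasure γ]
    (hγ₁ : γ.map Prod.fst = μ) (hγ₂ : γ.map Prod.snd = ν)
    (h fS fT : X → ℝ)
    (hLh : LipschitzWith 1 h) (hLfS : LipschitzWith 1 fS) (hLfT : LipschitzWith 1 fT)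
    (hdist : Integrable (fun p : X × X => dist p.1 p.2) γ)
    (hμ₁ : Integrable (fun x => |h x - fT x|) μ)
    (hν₁ : Integrable (fun x => |h x - fT x|) ν)
    (hμ₂ : Integrable (fun x => |h x - fS x|) μ)
    (hν₂ : Integrable (fun x => |h x - fS x|) ν)
    (hμ₃ : Integrable (fun x => |fS x - fT x|) μ)
    (hν₃ : Integrable (fun x => |fS x - fT x|) ν) :
    ∫ x, |h x - fT x| ∂ν ≤
      ∫ x, |h x - fS x| ∂μ + 2 * ∫ p, dist p.1 p.2 ∂γ +
        min (∫ x, |fS x - fT x| ∂μ) (∫ x, |fS x - fT x| ∂ν) :=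
  conditional_shift_bound_min_general μ ν γ hγ₁ hγ₂ h fS fT hLh hLfS hLfT hdist hμ₁ hν₁ hμ₂ hν₂ hμ₃
    hν₃
end
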